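/- If a connected simple graph G contains a vertex of degree at least 4, then for every positive weight function μ on V_G, sup_{v ∈ V_G} μ(B(v,1))/μ(v) ≥ 3; hence C_G^0 ≥ 3. -/
import Mathlib


/-- if a connected locally finite graph contains a vertex of degree at
least 4, then for every positive weight function μ, `sup_v μ(B(v,1))/μ(v) ≥ 3`
(every upper bound `C` of the ratios satisfies `C ≥ 3`); hence `C_G^0 ≥ 3`. -/
theorem stmt_9 {V : Type*} (G : SimpleGraph V) [inst : ∀ v : V, Fintype (G.neighborSet v)]
    (hG : G.Connected) (hdeg : ∃ v : V, 4 ≤ G.degree v)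
    (μ : V → ℝ) (hμ : ∀ v, 0 < μ v) :
    ∀ C : ℝ, (∀ v : V, (μ v + ∑ w ∈ G.neighborFinset v, μ w) / μ v ≤ C) → 3 ≤ C := by
  intro C hC
  obtain ⟨v, hv⟩ := hdeg
  have hcard : 4 ≤ (G.neighborFinset v).card := hv
  have hne : (G.neighborFinset v).Nonempty := Finset.card_pos.mp (by omega)
  have hSpos : 0 < ∑ w ∈ G.neighborFinset v, μ w :=
    Finset.sum_pos (fun w _ => hμ w) hne
  have hμv := hμ v
  have hv2 : μ v + ∑ w ∈ G.neighborFinset v, μ w ≤ C * μ v := by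
    have := hC v
    rw [div_le_iff₀ hμv] at this
    linarith
  have hC1 : 1 < C := by nlinarith
  have hnb : ∀ w ∈ G.neighborFinset v, μ v ≤ (C - 1) * μ w := by
    intro w hw
    have hw' := hC w
    rw [div_le_iff₀ (hμ w)] at hw'
    have hvw : v ∈ G.neighborFinset w := by
      rw [SimpleGraph.mem_neighborFinset] at hw ⊢
      exact hw.symm
    have hle : μ v ≤ ∑ u ∈ G.neighborFinset w, μ u :=
      Finset.single_le_sum (fun u _ => (hμ u).le) hvw
    nlinarith
  have hsum : (G.neighborFinset v).card * μ v ≤ (C - 1) * ∑ w ∈ G.neighborFinset v, μ w := by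
    rw [Finset.mul_sum]
    calc ((G.neighborFinset v).card : ℝ) * μ v
        = ∑ _w ∈ G.neighborFinset v, μ v := by rw [Finset.sum_const, nsmul_eq_mul]
      _ ≤ ∑ w ∈ G.neighborFinset v, (C - 1) * μ w := Finset.sum_le_sum hnb
  have h4 : (4 : ℝ) * μ v ≤ (C - 1) * ∑ w ∈ G.neighborFinset v, μ w := by
    refine le_trans ?_ hsum
    have : (4 : ℝ) ≤ ((G.neighborFinset v).card : ℝ) := by exact_mod_cast hcard
    nlinarith
  nlinarith
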